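/- arXiv:2002.10550 — 2 statements merged into one kernel-verified Lean document; each statement's English description precedes it below -/
import Mathlib

section
/- Let a, b be integers with 12a + 18b = 12 (i.e., (aH + bC)·(C - H) = 12) and 2a² + 16ab + 17b² > 0 (i.e., (aH + bC)² > 0). Then (a,b) ∈ {(1,0), (-2,2), (-5,4)}, i.e., the class aH + bC is one of H, 2(C - H), 4C - 5H. -/
/-- In the lattice `ℤH ⊕ ℤC` with `H² = 4`, `H·C = 16`, `C² = 34`: if
`(aH + bC)·(C - H) = 12`, i.e. `12a + 18b = 12`, and `(aH + bC)² > 0`, i.e.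
`2a² + 16ab + 17b² > 0`, then `aH + bC ∈ {H, 2(C-H), 4C-5H}`. -/
theorem stmt_5 (a b : ℤ) (h1 : 12 * a + 18 * b = 12)
    (h2 : 2 * a ^ 2 + 16 * a * b + 17 * b ^ 2 > 0) :
    (a = 1 ∧ b = 0) ∨ (a = -2 ∧ b = 2) ∨ (a = -5 ∧ b = 4) := by
  have hb : 0 ≤ b ∧ b ≤ 4 := by
    constructor <;> nlinarith [sq_nonneg (2*a + 3*b - 2), sq_nonneg b, sq_nonneg (b-2), sq_nonneg (b-4)]
  obtain ⟨h0, h4⟩ := hb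
  interval_cases b <;> omega
end

section
/- Let V and W be finite-dimensional vector spaces over an algebraically closed field with dim V = r+1 ≤ dim W = m. The set Z of tensors in V ⊗ W of rank at most r (i.e., not of maximal rank r+1) is a Zariski-closed subset of codimension m - r. Consequently, for any linear subspace X ⊆ V ⊗ W, the codimension of X ∩ Z in X is at most m - r; in particular, if dim X > m - r then X contains a nonzero tensor of non-maximal rank. -/
/-!
If every nonzero map in `X` were injective, the bilinear map `X × V → W`, `(f, v) ↦ f v`, would
give `m` forms of bidegree `(1, 1)` on `ℙ(X) × ℙ(V)` without common zero. By the Nullstellensatz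
the ideal they generate then contains a power of every product `xᵢ yⱼ`, hence every polynomial
of bidegree `(k, k)` for `k` large. Let `h_s(k)` be the dimension of the bidegree-`(k, k)` part of
`S/(s)`. Adding a form `q` to `s` gives `h_s(k) ≤ ∑_{j ≤ k} h_{s ∪ {q}}(j)`, because multiplication
by `q ≠ 0` is injective. So `dim S_{k,k}` is at most an `m`-fold partial sum of an eventually
vanishing function, which is `O(k^(m-1))`; but `dim S_{k,k}` grows like `k^(dim X + dim V - 2)`
and `dim X + dim V - 2 ≥ m`.
-/

open Module Submodule MvPolynomial
open scoped Pointwise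

def partialSums (f : ℕ → ℕ) (k : ℕ) : ℕ := ∑ j ∈ Finset.range (k + 1), f j

lemma partialSums_monotone : Monotone partialSums :=
  fun _ _ hfg _ => Finset.sum_le_sum fun j _ => hfg j

lemma le_partialSums_of_le_add {F G : ℕ → ℕ} (h₀ : G 0 ≤ F 0)
    (h : ∀ k, G (k + 1) ≤ F (k + 1) + G k) : G ≤ partialSums F := by
  intro k
  induction k with
  | zero => simpa [partialSums] using h₀
  | succ k ih =>
    rw [partialSums, Finset.sum_range_succ]
    exact (h k).trans (by rw [add_comm]; exact Nat.add_le_add_right ih _)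

lemma partialSums_le_of_le_pow {f : ℕ → ℕ} {C e : ℕ} (hf : ∀ k, f k ≤ C * (k + 1) ^ e) (k : ℕ) :
    partialSums f k ≤ C * (k + 1) ^ (e + 1) := by
  calc partialSums f k ≤ (Finset.range (k + 1)).card • (C * (k + 1) ^ e) :=
        Finset.sum_le_card_nsmul _ _ _ fun j hj =>
          (hf j).trans (Nat.mul_le_mul_left _ (Nat.pow_le_pow_left (by simpa using hj) _))
    _ = C * (k + 1) ^ (e + 1) := by rw [Finset.card_range, smul_eq_mul, pow_succ]; ring

lemma partialSums_le_of_eventually_zero {f : ℕ → ℕ} {k₀ : ℕ} (hf : ∀ k, k₀ ≤ k → f k = 0)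
    (k : ℕ) : partialSums f k ≤ ∑ j ∈ Finset.range k₀, f j := by
  classical
  rw [partialSums, ← Finset.sum_filter_of_ne (p := (· < k₀)) fun j _ hj =>
    not_le.mp (mt (hf j) hj)]
  exact Finset.sum_le_sum_of_subset fun j hj => by simp_all

lemma iterate_partialSums_le_of_eventually_zero {f : ℕ → ℕ} {k₀ : ℕ}
    (hf : ∀ k, k₀ ≤ k → f k = 0) : ∃ C, ∀ i k, partialSums^[i + 1] f k ≤ C * (k + 1) ^ i := by
  refine ⟨∑ j ∈ Finset.range k₀, f j, fun i => ?_⟩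
  induction i with
  | zero => simpa using partialSums_le_of_eventually_zero hf
  | succ i ih =>
    intro k
    rw [Function.iterate_succ_apply']
    exact partialSums_le_of_le_pow ih k

lemma false_of_pow_succ_le_of_le_mul_pow {f : ℕ → ℕ} {c C e : ℕ}
    (hlow : ∀ j, (j + 1) ^ (e + 1) ≤ f (c * j)) (hup : ∀ k, f k ≤ C * (k + 1) ^ e) : False := by
  set j := C * (c + 1) ^ e
  have : (j + 1) ^ e * (j + 1) ≤ (j + 1) ^ e * j :=
    calc (j + 1) ^ e * (j + 1) ≤ C * (c * j + 1) ^ e := by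
          rw [← pow_succ]; exact (hlow j).trans (hup _)
      _ ≤ C * ((c + 1) * (j + 1)) ^ e := by gcongr; nlinarith
      _ = (j + 1) ^ e * j := by rw [mul_pow]; ring
  have := Nat.le_of_mul_le_mul_left this (by positivity)
  omega

section GradedChain

variable {K A : Type*} [Field K] [CommRing A] [Algebra K A] (𝒜 : ℕ → Submodule K A)

/-- For forms `s` of degree one in a graded ring, the degree-`k` part of the ideal they generate. -/
def idealPiece (s : Set A) : ℕ → Submodule K A
  | 0 => ⊥
  | k + 1 => span K s * 𝒜 k

@[simp] lemma idealPiece_zero (s : Set A) : idealPiece 𝒜 s 0 = ⊥ := rfl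

noncomputable def quotientHilbert (s : Set A) (k : ℕ) : ℕ :=
  finrank K (𝒜 k) - finrank K (idealPiece 𝒜 s k)

lemma quotientHilbert_zero (s : Set A) : quotientHilbert 𝒜 s 0 = finrank K (𝒜 0) := by
  rw [quotientHilbert, idealPiece_zero, finrank_bot, Nat.sub_zero]

variable {𝒜} [SetLike.GradedMonoid 𝒜]

lemma span_mul_le {s : Set A} {i : ℕ} (hs : s ⊆ 𝒜 i) (k : ℕ) : span K s * 𝒜 k ≤ 𝒜 (i + k) :=
  mul_le.mpr fun _ hx _ hy => SetLike.GradedMul.mul_mem (span_le.mpr hs hx) hy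

lemma idealPiece_le {s : Set A} (hs : s ⊆ 𝒜 1) : ∀ k, idealPiece 𝒜 s k ≤ 𝒜 k
  | 0 => bot_le
  | k + 1 => (add_comm 1 k ▸ span_mul_le hs k :)

lemma smul_idealPiece_le {s : Set A} {q : A} (hq : q ∈ 𝒜 1) :
    ∀ k, q • idealPiece 𝒜 s k ≤ idealPiece 𝒜 s (k + 1)
  | 0 => by simp [idealPiece]
  | k + 1 => by
    rw [idealPiece, idealPiece, ← span_singleton_mul, mul_left_comm]
    exact mul_le_mul' le_rfl (add_comm 1 k ▸ span_mul_le (Set.singleton_subset_iff.mpr hq) k)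

lemma finrank_smul_of_ne_zero [IsDomain A] {q : A} (hq : q ≠ 0) (p : Submodule K A) :
    finrank K ↥(q • p) = finrank K p :=
  (LinearEquiv.finrank_eq
    (p.equivMapOfInjective (DistribSMul.toLinearMap K A q) (mul_right_injective₀ hq))).symm

variable [∀ k, FiniteDimensional K (𝒜 k)] [IsDomain A]

lemma quotientHilbert_succ_le {s : Set A} (hs : s ⊆ 𝒜 1) {q : A} (hq : q ∈ 𝒜 1) (k : ℕ) :
    quotientHilbert 𝒜 s (k + 1) ≤
      quotientHilbert 𝒜 (insert q s) (k + 1) + quotientHilbert 𝒜 s k := by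
  have hqs : insert q s ⊆ 𝒜 1 := Set.insert_subset hq hs
  have fd : ∀ {t : Set A} (_ : t ⊆ 𝒜 1) k, FiniteDimensional K (idealPiece 𝒜 t k) :=
    fun ht k => Submodule.finiteDimensional_of_le (idealPiece_le ht k)
  have := fd hs k
  have := fd hs (k + 1)
  have : FiniteDimensional K ↥(q • 𝒜 k) :=
    inferInstanceAs (FiniteDimensional K ↥(Submodule.map _ _))
  have hsplit : idealPiece 𝒜 (insert q s) (k + 1) = idealPiece 𝒜 s (k + 1) ⊔ q • 𝒜 k := by
    rw [idealPiece, idealPiece, span_insert, Submodule.sup_mul, span_singleton_mul, sup_comm]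
  have hJ := Submodule.finrank_mono (idealPiece_le hs k)
  have hJ' := Submodule.finrank_mono (idealPiece_le hqs (k + 1))
  have hsupinf := Submodule.finrank_sup_add_finrank_inf_eq (idealPiece 𝒜 s (k + 1)) (q • 𝒜 k)
  have hM : finrank K ↥(q • 𝒜 k) ≤ finrank K (𝒜 k) := Submodule.finrank_map_le _ _
  unfold quotientHilbert
  rw [hsplit] at hJ' ⊢
  rcases eq_or_ne q 0 with rfl | hq0
  · have : (0 : A) • 𝒜 k = ⊥ := by rw [← span_singleton_mul]; simp
    rw [this, sup_bot_eq]
    omega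
  have hinf : finrank K (idealPiece 𝒜 s k) ≤ finrank K ↥(idealPiece 𝒜 s (k + 1) ⊓ q • 𝒜 k) := by
    rw [← finrank_smul_of_ne_zero hq0]
    exact Submodule.finrank_mono
      (le_inf (smul_idealPiece_le hq k) (smul_mono_right q (idealPiece_le hs k)))
  omega

lemma quotientHilbert_le_partialSums {s : Set A} (hs : s ⊆ 𝒜 1) {q : A} (hq : q ∈ 𝒜 1) :
    quotientHilbert 𝒜 s ≤ partialSums (quotientHilbert 𝒜 (insert q s)) :=
  le_partialSums_of_le_add (by rw [quotientHilbert_zero, quotientHilbert_zero])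
    (quotientHilbert_succ_le hs hq)

lemma finrank_le_iterate_partialSums (l : List A) (hl : ∀ q ∈ l, q ∈ 𝒜 1) (k : ℕ) :
    finrank K (𝒜 k) ≤ partialSums^[l.length] (quotientHilbert 𝒜 {q | q ∈ l}) k := by
  induction l generalizing k with
  | nil =>
    have hbot : idealPiece 𝒜 {q | q ∈ ([] : List A)} k = ⊥ := by cases k <;> simp [idealPiece]
    rw [List.length_nil, Function.iterate_zero_apply, quotientHilbert, hbot, finrank_bot,
      Nat.sub_zero]
  | cons q l ih =>
    have hcons : {x | x ∈ q :: l} = insert q {x | x ∈ l} := by ext; simp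
    rw [List.length_cons, Function.iterate_succ_apply, hcons]
    exact (ih (fun x hx => hl x (List.mem_cons_of_mem q hx)) k).trans
      (partialSums_monotone.iterate _
        (quotientHilbert_le_partialSums (fun x hx => hl x (List.mem_cons_of_mem q hx))
          (hl q List.mem_cons_self)) k)

end GradedChain

section GradedSpan

variable {K A ι τ : Type*} [Field K] [CommRing A] [Algebra K A] [DecidableEq ι]
  [AddLeftCancelMonoid ι] (𝒜 : ι → Submodule K A) [GradedAlgebra 𝒜]

lemma mem_span_mul_of_mem_ideal_span [Fintype τ] {P : τ → A} {i j : ι} (hP : ∀ t, P t ∈ 𝒜 i)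
    {z : A} (hz : z ∈ 𝒜 (i + j)) (hI : z ∈ Ideal.span (Set.range P)) :
    z ∈ span K (Set.range P) * 𝒜 j := by
  obtain ⟨g, rfl⟩ := Ideal.mem_span_range_iff_exists_fun.mp hI
  rw [← DirectSum.decompose_of_mem_same 𝒜 hz, DirectSum.decompose_sum, DFinsupp.finsetSum_apply,
    Submodule.coe_sum]
  refine Submodule.sum_mem _ fun t _ => ?_
  rw [mul_comm (g t), DirectSum.coe_decompose_mul_add_of_left_mem 𝒜 (hP t)]
  exact mul_mem_mul (subset_span ⟨t, rfl⟩) (SetLike.coe_mem _)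

end GradedSpan

section Bigraded

variable (K : Type*) [Field K] (ι κ : Type*)

def bideg : ι ⊕ κ → ℕ × ℕ := Sum.elim (fun _ => (1, 0)) (fun _ => (0, 1))

abbrev bihomogeneous (u : ℕ × ℕ) : Submodule K (MvPolynomial (ι ⊕ κ) K) :=
  weightedHomogeneousSubmodule K (bideg ι κ) u

def diagBihomogeneous (k : ℕ) : Submodule K (MvPolynomial (ι ⊕ κ) K) := bihomogeneous K ι κ (k, k)

instance : SetLike.GradedMonoid (diagBihomogeneous K ι κ) where
  one_mem := isWeightedHomogeneous_one K _
  mul_mem _ _ _ _ ha hb := by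
    simpa [diagBihomogeneous] using (IsWeightedHomogeneous.mul ha hb)

lemma finrank_bihomogeneous (u : ℕ × ℕ) :
    finrank K (bihomogeneous K ι κ u) =
      Nat.card {d : ι ⊕ κ →₀ ℕ | Finsupp.weight (bideg ι κ) d = u} := by
  rw [bihomogeneous, weightedHomogeneousSubmodule_eq_finsupp_supported]
  exact finrank_eq_nat_card_basis (basisRestrictSupport K _)

variable {ι κ} [Fintype ι] [Fintype κ]

lemma weight_bideg (d : ι ⊕ κ →₀ ℕ) :
    Finsupp.weight (bideg ι κ) d = (∑ a, d (.inl a), ∑ b, d (.inr b)) := by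
  rw [Finsupp.weight_apply, Finsupp.sum_fintype _ _ (by simp), Fintype.sum_sum_type]
  ext <;> simp [bideg, Prod.fst_sum, Prod.snd_sum]

lemma finite_of_weight_bideg_eq (u : ℕ × ℕ) : {d : ι ⊕ κ →₀ ℕ | Finsupp.weight (bideg ι κ) d = u}.Finite :=
  (Finsupp.finite_of_nat_weight_eq (fun _ => 1) (fun _ => one_ne_zero) (u.1 + u.2)).subset
    fun d hd => by
      simp only [Set.mem_ofPred_eq, weight_bideg] at hd ⊢
      rw [← hd, Finsupp.weight_apply, Finsupp.sum_fintype _ _ (by simp), Fintype.sum_sum_type]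
      simp

instance (u : ℕ × ℕ) : FiniteDimensional K (bihomogeneous K ι κ u) := by
  rw [bihomogeneous, weightedHomogeneousSubmodule_eq_finsupp_supported]
  have := (finite_of_weight_bideg_eq (ι := ι) (κ := κ) u).to_subtype
  exact Module.Finite.of_basis (basisRestrictSupport K _)

instance (k : ℕ) : FiniteDimensional K (diagBihomogeneous K ι κ k) :=
  inferInstanceAs (FiniteDimensional K (bihomogeneous K ι κ (k, k)))

noncomputable def exponentWithSlack (k : ℕ) (f : ι → ℕ) (g : κ → ℕ) : Option ι ⊕ Option κ →₀ ℕ :=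
  Finsupp.equivFunOnFinite.symm <|
    Sum.elim (fun o => o.elim (k - ∑ a, f a) f) (fun o => o.elim (k - ∑ b, g b) g)

lemma weight_exponentWithSlack {k : ℕ} {f : ι → ℕ} {g : κ → ℕ} (hf : ∑ a, f a ≤ k)
    (hg : ∑ b, g b ≤ k) : Finsupp.weight (bideg _ _) (exponentWithSlack k f g) = (k, k) := by
  rw [weight_bideg]
  simp only [exponentWithSlack, Finsupp.coe_equivFunOnFinite_symm, Sum.elim_inl,
    Sum.elim_inr, Fintype.sum_option, Option.elim_none, Option.elim_some]
  ext <;> simp only <;> omega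

omit [Fintype κ] in
lemma sum_val_le_card_mul {j : ℕ} (f : ι → Fin (j + 1)) : ∑ a, (f a : ℕ) ≤ Fintype.card ι * j :=
  (Finset.sum_le_card_nsmul _ _ j fun a _ => Nat.lt_succ_iff.mp (f a).isLt).trans_eq (by simp)

lemma pow_le_finrank_bihomogeneous {j k : ℕ} (hι : Fintype.card ι * j ≤ k)
    (hκ : Fintype.card κ * j ≤ k) :
    (j + 1) ^ (Fintype.card ι + Fintype.card κ) ≤
      finrank K (bihomogeneous K (Option ι) (Option κ) (k, k)) := by
  let e : (ι → Fin (j + 1)) × (κ → Fin (j + 1)) →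
      {d : Option ι ⊕ Option κ →₀ ℕ | Finsupp.weight (bideg _ _) d = (k, k)} := fun fg =>
    ⟨exponentWithSlack k (fun a => fg.1 a) (fun b => fg.2 b),
      weight_exponentWithSlack ((sum_val_le_card_mul _).trans hι) ((sum_val_le_card_mul _).trans hκ)⟩
  have he : Function.Injective e := by
    rintro ⟨f, g⟩ ⟨f', g'⟩ h
    have h' x := DFunLike.congr_fun (congrArg Subtype.val h) x
    simp only [e, exponentWithSlack, Finsupp.coe_equivFunOnFinite_symm] at h'
    simp only [Prod.mk.injEq, funext_iff, Fin.ext_iff]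
    exact ⟨fun a => h' (.inl (some a)), fun b => h' (.inr (some b))⟩
  have := (finite_of_weight_bideg_eq (ι := Option ι) (κ := Option κ) (k, k)).to_subtype
  rw [finrank_bihomogeneous]
  refine le_of_eq_of_le ?_ (Nat.card_le_card_of_injective e he)
  simp [pow_add, Nat.card_fun]

lemma monomial_mem_of_pow_mem {I : Ideal (MvPolynomial (ι ⊕ κ) K)} {N : ℕ}
    (hN : ∀ a b, (X (.inl a) * X (.inr b)) ^ N ∈ I) {k : ℕ} (hι : Fintype.card ι * N < k)
    (hκ : Fintype.card κ * N < k) {d : ι ⊕ κ →₀ ℕ} (hd : Finsupp.weight (bideg ι κ) d = (k, k)) :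
    monomial d (1 : K) ∈ I := by
  rw [weight_bideg, Prod.mk.injEq] at hd
  obtain ⟨a, -, ha⟩ := Finset.exists_lt_of_sum_lt (s := Finset.univ) (f := fun _ => N)
    (g := fun a => d (.inl a)) (by simpa [hd.1] using hι)
  obtain ⟨b, -, hb⟩ := Finset.exists_lt_of_sum_lt (s := Finset.univ) (f := fun _ => N)
    (g := fun b => d (.inr b)) (by simpa [hd.2] using hκ)
  set e : ι ⊕ κ →₀ ℕ := Finsupp.single (.inl a) N + Finsupp.single (.inr b) N
  have he : e ≤ d := by
    intro x
    rcases x with x | x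
    · by_cases hx : x = a <;> simp_all [e, Ne.symm, ha.le]
    · by_cases hx : x = b <;> simp_all [e, Ne.symm, hb.le]
  have hsplit : monomial d (1 : K) = (X (.inl a) * X (.inr b)) ^ N * monomial (d - e) 1 := by
    rw [mul_pow, X_pow_eq_monomial, X_pow_eq_monomial, monomial_mul, monomial_mul, one_mul, one_mul,
      add_tsub_cancel_of_le he]
  exact hsplit ▸ I.mul_mem_right _ (hN a b)

lemma bihomogeneous_le_of_pow_mem {I : Ideal (MvPolynomial (ι ⊕ κ) K)} {N : ℕ}
    (hN : ∀ a b, (X (.inl a) * X (.inr b)) ^ N ∈ I) {k : ℕ} (hι : Fintype.card ι * N < k)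
    (hκ : Fintype.card κ * N < k) :
    bihomogeneous K ι κ (k, k) ≤ I.restrictScalars K := by
  rw [bihomogeneous, weightedHomogeneousSubmodule_eq_finsupp_supported, ← restrictSupport,
    restrictSupport_eq_span, span_le]
  rintro _ ⟨d, hd, rfl⟩
  exact monomial_mem_of_pow_mem K hN hι hκ hd

end Bigraded

section Nullstellensatz

variable {K ι κ τ : Type*} [Field K] [IsAlgClosed K] [Finite ι] [Finite κ]

lemma exists_pow_mem_span_of_forall_eval {P : τ → MvPolynomial (ι ⊕ κ) K}
    (h : ∀ z : ι ⊕ κ → K, (∀ t, eval z (P t) = 0) → ∀ a b, z (.inl a) * z (.inr b) = 0) :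
    ∃ N, ∀ a b,
      (X (.inl a) * X (.inr b) : MvPolynomial (ι ⊕ κ) K) ^ N ∈ Ideal.span (Set.range P) := by
  set J : Ideal (MvPolynomial (ι ⊕ κ) K) :=
    Ideal.span (Set.range fun ab : ι × κ => X (.inl ab.1) * X (.inr ab.2))
  have hJ : J ≤ (Ideal.span (Set.range P)).radical := by
    rw [← vanishingIdeal_zeroLocus_eq_radical (K := K), Ideal.span_le]
    rintro _ ⟨⟨a, b⟩, rfl⟩ z hz
    simpa using h z (fun t => by simpa using hz (P t) (Ideal.subset_span ⟨t, rfl⟩)) a b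
  obtain ⟨N, hN⟩ :=
    Ideal.exists_pow_le_of_le_radical_of_fg hJ (Submodule.fg_span (Set.finite_range _))
  exact ⟨N, fun a b => hN (Ideal.pow_mem_pow (Ideal.subset_span (Set.mem_range_self (a, b))) N)⟩

end Nullstellensatz

attribute [local instance] MvPolynomial.weightedGradedAlgebra in
lemma quotientHilbert_diagBihomogeneous_eq_zero {K ι κ τ : Type*} [Field K] [Fintype ι]
    [Fintype κ] [Fintype τ] {P : τ → MvPolynomial (ι ⊕ κ) K}
    (hP : ∀ t, P t ∈ bihomogeneous K ι κ (1, 1)) {N : ℕ}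
    (hN : ∀ a b, (X (.inl a) * X (.inr b)) ^ N ∈ Ideal.span (Set.range P)) {k : ℕ}
    (hι : Fintype.card ι * N ≤ k) (hκ : Fintype.card κ * N ≤ k) :
    quotientHilbert (diagBihomogeneous K ι κ) (Set.range P) (k + 1) = 0 := by
  have hle : diagBihomogeneous K ι κ (k + 1) ≤
      idealPiece (diagBihomogeneous K ι κ) (Set.range P) (k + 1) :=
    fun z hz => mem_span_mul_of_mem_ideal_span (weightedHomogeneousSubmodule K (bideg ι κ)) hP
      (j := (k, k)) (by rwa [show ((1, 1) + (k, k) : ℕ × ℕ) = (k + 1, k + 1) by simp [add_comm]])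
      (bihomogeneous_le_of_pow_mem K hN (Nat.lt_succ_of_le hι) (Nat.lt_succ_of_le hκ) hz)
  rw [quotientHilbert, le_antisymm (idealPiece_le (Set.range_subset_iff.mpr hP) _) hle,
    Nat.sub_self]

theorem exists_common_zero_of_bihomogeneous {K ι κ τ : Type*} [Field K] [IsAlgClosed K]
    [Fintype ι] [Fintype κ] [Fintype τ] (P : τ → MvPolynomial (Option ι ⊕ Option κ) K)
    (hP : ∀ t, P t ∈ bihomogeneous K (Option ι) (Option κ) (1, 1))
    (hcard : Fintype.card τ ≤ Fintype.card ι + Fintype.card κ) :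
    ∃ z : Option ι ⊕ Option κ → K, (∃ a, z (.inl a) ≠ 0) ∧ (∃ b, z (.inr b) ≠ 0) ∧
      ∀ t, eval z (P t) = 0 := by
  rcases isEmpty_or_nonempty τ with hτ | hτ
  · exact ⟨fun _ => 1, ⟨none, one_ne_zero⟩, ⟨none, one_ne_zero⟩, fun t => isEmptyElim t⟩
  by_contra hno
  obtain ⟨N, hN⟩ := exists_pow_mem_span_of_forall_eval (P := P) fun z hz a b => by
    by_contra hab
    exact hno ⟨z, ⟨a, left_ne_zero_of_mul hab⟩, ⟨b, right_ne_zero_of_mul hab⟩, hz⟩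
  set 𝒜 := diagBihomogeneous K (Option ι) (Option κ)
  set c := Fintype.card ι + Fintype.card κ with hc
  obtain ⟨C, hC⟩ := iterate_partialSums_le_of_eventually_zero (f := quotientHilbert 𝒜 (Set.range P))
    (k₀ := (c + 2) * N + 1) fun
      | 0, hk => by omega
      | k + 1, hk => quotientHilbert_diagBihomogeneous_eq_zero hP hN (by simp; nlinarith)
          (by simp; nlinarith)
  refine false_of_pow_succ_le_of_le_mul_pow (f := fun k => finrank K (𝒜 k)) (c := c) (C := C)
    (e := Fintype.card τ - 1) (fun j => ?_) (fun k => ?_)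
  · calc (j + 1) ^ (Fintype.card τ - 1 + 1) ≤ (j + 1) ^ c :=
          Nat.pow_le_pow_right (by omega) (by have := Fintype.card_pos (α := τ); omega)
      _ ≤ _ := pow_le_finrank_bihomogeneous K (by nlinarith) (by nlinarith)
  · set l := (Finset.univ : Finset τ).toList.map P
    have hl : {q | q ∈ l} = Set.range P := by ext; simp [l]
    have := finrank_le_iterate_partialSums (𝒜 := 𝒜) l
      (fun q hq => Set.range_subset_iff.mpr hP (hl.subset hq)) k
    rw [hl, List.length_map, Finset.length_toList, Finset.card_univ,
      ← Nat.sub_add_cancel (Fintype.card_pos (α := τ))] at this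
    exact this.trans (hC _ k)

section BilinearMap

variable {K E F G ι κ τ : Type*} [Field K] [AddCommGroup E] [Module K E] [AddCommGroup F]
  [Module K F] [AddCommGroup G] [Module K G] [Fintype ι] [Fintype κ]
  (B : E →ₗ[K] F →ₗ[K] G) (bE : Basis ι K E) (bF : Basis κ K F) (bG : Basis τ K G)

noncomputable def coordinatePolynomial (t : τ) : MvPolynomial (ι ⊕ κ) K :=
  ∑ a, ∑ b, C (bG.repr (B (bE a) (bF b)) t) * (X (.inl a) * X (.inr b))

lemma coordinatePolynomial_mem (t : τ) :
    coordinatePolynomial B bE bF bG t ∈ bihomogeneous K ι κ (1, 1) :=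
  Submodule.sum_mem _ fun a _ => Submodule.sum_mem _ fun b _ => by
    simpa [bideg] using (isWeightedHomogeneous_C (bideg ι κ) _).mul
      ((isWeightedHomogeneous_X K (bideg ι κ) (.inl a)).mul (isWeightedHomogeneous_X K _ (.inr b)))

lemma eval_coordinatePolynomial (z : ι ⊕ κ → K) (t : τ) :
    eval z (coordinatePolynomial B bE bF bG t) =
      bG.repr (B (bE.equivFun.symm (z ∘ .inl)) (bF.equivFun.symm (z ∘ .inr))) t := by
  simp only [coordinatePolynomial, Basis.equivFun_symm_apply, map_sum, map_smul,
    LinearMap.sum_apply, LinearMap.smul_apply, Finsupp.coe_finsetSum, Finsupp.coe_smul,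
    Finset.sum_apply, Pi.smul_apply, smul_eq_mul, map_mul, eval_C, eval_X, Function.comp_apply]
  rw [Finset.sum_comm]
  refine Finset.sum_congr rfl fun b _ => ?_
  rw [Finset.mul_sum]
  exact Finset.sum_congr rfl fun a _ => by ring

end BilinearMap

theorem LinearMap.exists_ne_zero_ne_zero_apply_eq_zero {K E F G : Type*} [Field K] [IsAlgClosed K]
    [AddCommGroup E] [Module K E] [FiniteDimensional K E] [Nontrivial E]
    [AddCommGroup F] [Module K F] [FiniteDimensional K F] [Nontrivial F]
    [AddCommGroup G] [Module K G] [FiniteDimensional K G]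
    (B : E →ₗ[K] F →ₗ[K] G) (h : finrank K G + 2 ≤ finrank K E + finrank K F) :
    ∃ x ≠ 0, ∃ y ≠ 0, B x y = 0 := by
  obtain ⟨a, ha⟩ := Nat.exists_eq_add_one.mpr (finrank_pos (R := K) (M := E))
  obtain ⟨b, hb⟩ := Nat.exists_eq_add_one.mpr (finrank_pos (R := K) (M := F))
  let bE := (finBasisOfFinrankEq K E ha).reindex (finSuccEquiv a)
  let bF := (finBasisOfFinrankEq K F hb).reindex (finSuccEquiv b)
  let bG := finBasis K G
  obtain ⟨z, ⟨i, hi⟩, ⟨j, hj⟩, hz⟩ := exists_common_zero_of_bihomogeneous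
    (coordinatePolynomial B bE bF bG) (coordinatePolynomial_mem B bE bF bG) (by simp; omega)
  refine ⟨bE.equivFun.symm (z ∘ .inl), ?_, bF.equivFun.symm (z ∘ .inr), ?_, ?_⟩
  · exact fun h0 => hi (congrFun (bE.equivFun.symm.map_eq_zero_iff.mp h0) i)
  · exact fun h0 => hj (congrFun (bF.equivFun.symm.map_eq_zero_iff.mp h0) j)
  · exact bG.repr.map_eq_zero_iff.mp <| Finsupp.ext fun t =>
      (eval_coordinatePolynomial B bE bF bG z t).symm.trans (hz t)

theorem stmt_8_general (K : Type*) [Field K] [IsAlgClosed K]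
    (V W : Type*) [AddCommGroup V] [Module K V] [FiniteDimensional K V]
    [AddCommGroup W] [Module K W] [FiniteDimensional K W]
    (r m : ℕ) (hV : finrank K V = r + 1) (hW : finrank K W = m)
    (X : Submodule K (V →ₗ[K] W)) (hX : m - r < finrank K X) :
    ∃ f ∈ X, f ≠ 0 ∧ finrank K (LinearMap.range f) ≤ r := by
  have : Nontrivial X := Module.nontrivial_of_finrank_pos (R := K) (by omega)
  have : Nontrivial V := Module.nontrivial_of_finrank_pos (R := K) (by omega)
  obtain ⟨f, hf, v, hv, hfv⟩ := X.subtype.exists_ne_zero_ne_zero_apply_eq_zero (by omega)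
  have hker : 0 < finrank K (LinearMap.ker (f : V →ₗ[K] W)) :=
    finrank_pos_iff_exists_ne_zero.mpr ⟨⟨v, hfv⟩, fun h => hv (congrArg Subtype.val h)⟩
  have := LinearMap.finrank_range_add_finrank_ker (f : V →ₗ[K] W)
  exact ⟨f, f.2, by simpa using hf, by omega⟩

/-- Let `V`, `W` be finite-dimensional vector spaces over an algebraically closed field with
`dim V = r + 1 ≤ dim W = m`. Identifying tensors in `V ⊗ W` with linear maps (so that the
rank of a tensor is the rank of the corresponding map), the locus `Z` of tensors of
non-maximal rank (rank `≤ r`) is Zariski-closed of codimension `m - r`; consequently any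
linear subspace `X` meets `Z` in codimension at most `m - r` inside `X`. In particular, if
`dim X > m - r` then `X` contains a nonzero tensor of non-maximal rank. -/
theorem stmt_8 (K : Type*) [Field K] [IsAlgClosed K]
    (V W : Type*) [AddCommGroup V] [Module K V] [FiniteDimensional K V]
    [AddCommGroup W] [Module K W] [FiniteDimensional K W]
    (r m : ℕ) (hV : finrank K V = r + 1) (hW : finrank K W = m) (hrm : r + 1 ≤ m)
    (X : Submodule K (V →ₗ[K] W)) (hX : m - r < finrank K X) :
    ∃ f ∈ X, f ≠ 0 ∧ finrank K (LinearMap.range f) ≤ r :=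
  stmt_8_general K V W r m hV hW X hX
end
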